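/- If G is an orientable, checkerboard colourable embedded graph, then for every positive integer n, P(G;−n) = (−1)^{f(G)} Σ_s 2^{m(s)}, where the sum is over all permissible n-valuations s of the medial graph G_m and m(s) is the number of total vertices in s. -/

import Mathlib

open Polynomial

namespace Penrose

/-- Addition in the Klein four-group `Bool × Bool` (componentwise xor). -/
def kAdd (p q : Bool × Bool) : Bool × Bool := (xor p.1 q.1, xor p.2 q.2)

lemma kAdd_eq_zero_iff : ∀ p q : Bool × Bool, kAdd p q = (false, false) ↔ p = q := by decide
lemma kAdd_eq_right_iff : ∀ p q : Bool × Bool, kAdd p q = q ↔ p = (false, false) := by decide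
lemma kAdd_kAdd : ∀ p q : Bool × Bool, kAdd (kAdd p q) q = p := by decide

/-- The flags (corner triples) of a ribbon graph with edge set `E`: each edge carries
four flags. -/
abbrev Flags (E : Type) := E × Bool × Bool

/-- A ribbon graph (cellularly embedded graph, possibly non-orientable) with edge set `E`,
in the flag (graph-encoded map) model.  The involution `σ0` (crossing edge `e`) acts on the
four flags of `e` by adding `a e` in the Klein four-group, the involution `σ2` (switching
sides of `e`) by adding `b e`, and the fixed-point-free involution `s1` (moving to the
adjacent edge-end in the same vertex-face corner) is given as data.
Vertices are the orbits of `⟨s1, σ2⟩`, edges the orbits of `⟨σ0, σ2⟩`, and the faces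
(boundary components) the orbits of `⟨σ0, s1⟩`. -/
structure RibbonGraph (E : Type) where
  s1 : Flags E → Flags E
  s1_invol : ∀ f, s1 (s1 f) = f
  s1_ne : ∀ f, s1 f ≠ f
  a : E → Bool × Bool
  b : E → Bool × Bool
  a_ne : ∀ e, a e ≠ (false, false)
  b_ne : ∀ e, b e ≠ (false, false)
  ab_ne : ∀ e, a e ≠ b e

namespace RibbonGraph

variable {E : Type}

/-- The involution crossing an edge. -/
def σ0 (G : RibbonGraph E) (f : Flags E) : Flags E := (f.1, kAdd f.2 (G.a f.1))

/-- The involution changing the side (face) of an edge, staying at the same vertex. -/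
def σ2 (G : RibbonGraph E) (f : Flags E) : Flags E := (f.1, kAdd f.2 (G.b f.1))

lemma σ2_σ2 (G : RibbonGraph E) (f : Flags E) : G.σ2 (G.σ2 f) = f := by
  cases f with
  | mk e p => simp [σ2, kAdd_kAdd]

/-- The partial Petrial `G^{τ(A)}`: give a half-twist to every edge in `A`
(replace `σ0` by `σ0 σ2` on the flags of the edges of `A`). -/
def petrial [DecidableEq E] (G : RibbonGraph E) (A : Finset E) : RibbonGraph E where
  s1 := G.s1
  s1_invol := G.s1_invol
  s1_ne := G.s1_ne
  a := fun e => if e ∈ A then kAdd (G.a e) (G.b e) else G.a e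
  b := G.b
  a_ne := by
    intro e
    by_cases h : e ∈ A
    · simpa [h, kAdd_eq_zero_iff] using G.ab_ne e
    · simpa [h] using G.a_ne e
  b_ne := G.b_ne
  ab_ne := by
    intro e
    by_cases h : e ∈ A
    · simpa [h, kAdd_eq_right_iff] using G.a_ne e
    · simpa [h] using G.ab_ne e

/-- The partial dual `G^{δ(A)}`: swap the roles of `σ0` and `σ2` on the flags of the
edges of `A`. -/
def pdual [DecidableEq E] (G : RibbonGraph E) (A : Finset E) : RibbonGraph E where
  s1 := G.s1
  s1_invol := G.s1_invol
  s1_ne := G.s1_ne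
  a := fun e => if e ∈ A then G.b e else G.a e
  b := fun e => if e ∈ A then G.a e else G.b e
  a_ne := by
    intro e
    by_cases h : e ∈ A
    · simpa [h] using G.b_ne e
    · simpa [h] using G.a_ne e
  b_ne := by
    intro e
    by_cases h : e ∈ A
    · simpa [h] using G.a_ne e
    · simpa [h] using G.b_ne e
  ab_ne := by
    intro e
    by_cases h : e ∈ A
    · simpa [h] using (G.ab_ne e).symm
    · simpa [h] using G.ab_ne e

/-- One step of the boundary (face) walk. -/
def faceStep (G : RibbonGraph E) (x y : Flags E) : Prop := y = G.σ0 x ∨ y = G.s1 x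

/-- The number of faces (boundary components) of `G`. -/
noncomputable def nFaces (G : RibbonGraph E) : ℕ := Nat.card (Quot G.faceStep)

/-- One step of the walk around a vertex. -/
def vertStep (G : RibbonGraph E) (x y : Flags E) : Prop := y = G.σ2 x ∨ y = G.s1 x

/-- The number of vertices of `G`. -/
noncomputable def nVerts (G : RibbonGraph E) : ℕ := Nat.card (Quot G.vertStep)

/-- The number of edges of `G`. -/
noncomputable def nEdges (_G : RibbonGraph E) : ℕ := Nat.card E

/-- One step of a walk in (the total space of) `G`. -/
def compStep (G : RibbonGraph E) (x y : Flags E) : Prop :=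
  y = G.σ0 x ∨ y = G.σ2 x ∨ y = G.s1 x

/-- The number of connected components of `G`. -/
noncomputable def nComps (G : RibbonGraph E) : ℕ := Nat.card (Quot G.compStep)

/-- Two flags lie at the same vertex. -/
def VertexConn (G : RibbonGraph E) : Flags E → Flags E → Prop := Relation.EqvGen G.vertStep

/-- `G` is connected. -/
def Connected (G : RibbonGraph E) : Prop := ∀ x y : Flags E, Relation.EqvGen G.compStep x y

/-- `G` is cubic: every vertex has exactly three edge-ends, i.e. six flags. -/
def Cubic (G : RibbonGraph E) : Prop :=
  ∀ x : Flags E, Nat.card {y : Flags E // G.VertexConn x y} = 6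

/-- `G` is orientable. -/
def Orientable (G : RibbonGraph E) : Prop :=
  ∃ o : Flags E → Bool, ∀ f, o (G.σ0 f) = !(o f) ∧ o (G.σ2 f) = !(o f) ∧ o (G.s1 f) = !(o f)

/-- `G` is a plane graph: orientable and of total genus `0` (Euler's formula). -/
def Plane (G : RibbonGraph E) : Prop :=
  G.Orientable ∧ G.nVerts + G.nFaces = G.nEdges + 2 * G.nComps

/-- `G` is checkerboard colourable: its faces admit a proper 2-colouring. -/
def CheckerboardColourable (G : RibbonGraph E) : Prop :=
  ∃ c : Flags E → Bool, ∀ f, c (G.σ0 f) = c f ∧ c (G.s1 f) = c f ∧ c (G.σ2 f) = !(c f)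

/-- The (topological) Penrose polynomial
`P(G;λ) = ∑_{A ⊆ E(G)} (−1)^{|A|} λ^{f(G^{τ(A)})}`. -/
noncomputable def penrose [Fintype E] [DecidableEq E] (G : RibbonGraph E) : Polynomial ℤ :=
  ∑ A ∈ (Finset.univ : Finset E).powerset,
    (-1 : Polynomial ℤ) ^ A.card * X ^ (G.petrial A).nFaces

/-- The boundary-crossing involution of `G − e`: pass through the deleted edge `e`
via `σ2`, and cross any other edge via `σ0`. -/
def delσ0 [DecidableEq E] (G : RibbonGraph E) (e : E) (f : Flags E) : Flags E :=
  if f.1 = e then G.σ2 f else G.σ0 f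

/-- One step of the boundary walk of `G − e`. -/
def faceStepDel [DecidableEq E] (G : RibbonGraph E) (e : E) (x y : Flags E) : Prop :=
  y = G.delσ0 e x ∨ y = G.s1 x

/-- The number of faces (boundary components) of `G − e`. -/
noncomputable def nFacesDel [DecidableEq E] (G : RibbonGraph E) (e : E) : ℕ :=
  Nat.card (Quot (G.faceStepDel e))

/-- The Penrose polynomial `P(G − e; λ)` of the graph obtained from `G` by deleting the
edge `e`. -/
noncomputable def penroseDel [Fintype E] [DecidableEq E] (G : RibbonGraph E) (e : E) :
    Polynomial ℤ :=
  ∑ A ∈ ((Finset.univ : Finset E).erase e).powerset,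
    (-1 : Polynomial ℤ) ^ A.card * X ^ ((G.petrial A).nFacesDel e)

/-- The Penrose polynomial `P(G/e; λ)` of the contraction `G/e := G^{δ(e)} − e`. -/
noncomputable def penroseContr [Fintype E] [DecidableEq E] (G : RibbonGraph E) (e : E) :
    Polynomial ℤ :=
  (G.pdual {e}).penroseDel e

/-- One step of a walk in `G − e` (together with the leftover vertices of `e`). -/
def compStepDel (G : RibbonGraph E) (e : E) (x y : Flags E) : Prop :=
  (x.1 ≠ e ∧ y = G.σ0 x) ∨ y = G.σ2 x ∨ y = G.s1 x

/-- The number of connected components of `G − e`. -/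
noncomputable def nCompsDel (G : RibbonGraph E) (e : E) : ℕ :=
  Nat.card (Quot (G.compStepDel e))

/-- The edge `e` is a bridge of `G`: deleting it increases the number of connected
components. -/
def IsBridge (G : RibbonGraph E) (e : E) : Prop := G.nComps < G.nCompsDel e

/-- The edge `e` is a non-twisted loop bounding a 2-cell (a trivial loop): one of its
sides is a face traversing only `e`, once. -/
def IsTrivialLoop (G : RibbonGraph E) (e : E) : Prop :=
  ∃ p : Bool × Bool, G.s1 (e, p) = G.σ0 (e, p)

/-- Isomorphism (equivalence) of ribbon graphs over the same edge set. -/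
def IsIso (G H : RibbonGraph E) : Prop :=
  ∃ ψ : Flags E ≃ Flags E, (∀ f, ψ (G.s1 f) = H.s1 (ψ f)) ∧
    (∀ f, ψ (G.σ0 f) = H.σ0 (ψ f)) ∧ (∀ f, ψ (G.σ2 f) = H.σ2 (ψ f))

/-- Given a Penrose state `σ` of the medial graph `G_m` (a choice, at the medial vertex
`v_e` of each edge `e` of `G`, of the crossing transition if `σ e = true` and of the white
split otherwise), the transition used at `v_e` by the closed curves of the state. -/
def stateσ0 (G : RibbonGraph E) (σ : E → Bool) (f : Flags E) : Flags E :=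
  if σ f.1 then G.σ0 (G.σ2 f) else G.σ0 f

/-- The number `c(s)` of closed curves of the Penrose state `σ` of the medial graph. -/
noncomputable def stateCurves (G : RibbonGraph E) (σ : E → Bool) : ℕ :=
  Nat.card (Quot (fun x y : Flags E => y = G.stateσ0 σ x ∨ y = G.s1 x))

/-- A `k`-valuation of the medial graph `G_m`: an edge colouring of `G_m` (edges of `G_m`
correspond to `s1`-orbits of flags of `G`). -/
def IsValuation {n : ℕ} (G : RibbonGraph E) (c : Flags E → Fin n) : Prop :=
  ∀ f, c (G.s1 f) = c f

/-- The medial vertex `v_e` is total in the valuation `c`: all four incident medial edges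
receive the same colour. -/
def TotalAt {n : ℕ} (G : RibbonGraph E) (c : Flags E → Fin n) (e : E) : Prop :=
  ∀ p q : Bool × Bool, c (e, p) = c (e, q)

/-- The medial vertex `v_e` has white-split type with two distinct colours. -/
def WhiteAt {n : ℕ} (G : RibbonGraph E) (c : Flags E → Fin n) (e : E) : Prop :=
  (∀ p : Bool × Bool, c (G.σ0 (e, p)) = c (e, p)) ∧
    c (e, (false, false)) ≠ c (G.σ2 (e, (false, false)))

/-- The medial vertex `v_e` has crossing type with two distinct colours. -/
def CrossAt {n : ℕ} (G : RibbonGraph E) (c : Flags E → Fin n) (e : E) : Prop :=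
  (∀ p : Bool × Bool, c (G.σ0 (G.σ2 (e, p))) = c (e, p)) ∧
    c (e, (false, false)) ≠ c (G.σ0 (e, (false, false)))

/-- An admissible valuation: at every medial vertex the two monochromatic pairs have
distinct colours and form a white split or a crossing. -/
def Admissible {n : ℕ} (G : RibbonGraph E) (c : Flags E → Fin n) : Prop :=
  G.IsValuation c ∧ ∀ e : E, G.WhiteAt c e ∨ G.CrossAt c e

/-- A permissible valuation: every medial vertex is of white-split, crossing or total
type. -/
def Permissible {n : ℕ} (G : RibbonGraph E) (c : Flags E → Fin n) : Prop :=
  G.IsValuation c ∧ ∀ e : E, G.WhiteAt c e ∨ G.CrossAt c e ∨ G.TotalAt c e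

/-- The number of crossing-type medial vertices of a valuation. -/
noncomputable def crCount {n : ℕ} (G : RibbonGraph E) (c : Flags E → Fin n) : ℕ :=
  Nat.card {e : E // G.CrossAt c e}

/-- The number of total medial vertices of a valuation. -/
noncomputable def totCount {n : ℕ} (G : RibbonGraph E) (c : Flags E → Fin n) : ℕ :=
  Nat.card {e : E // G.TotalAt c e}

/-- A proper edge 3-colouring of `G`: edges meeting at a vertex get distinct colours. -/
def ProperEdge3Coloring (G : RibbonGraph E) (κ : E → Fin 3) : Prop :=
  ∀ e e' : E, e ≠ e' →
    (∃ p q : Bool × Bool, G.VertexConn (e, p) (e', q)) → κ e ≠ κ e'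

/-- The circuit partition polynomial `j(G_m^P ; x)` of the Penrose directed medial graph
of an oriented checkerboard coloured graph `G`: its states are exactly the Penrose states
of `G_m`, so `j(G_m^P ; x) = ∑_s x^{c(s)} = ∑_{A ⊆ E(G)} x^{f(G^{τ(A)})}`. -/
noncomputable def circuitPartitionMedial [Fintype E] [DecidableEq E] (G : RibbonGraph E) :
    Polynomial ℤ :=
  ∑ A ∈ (Finset.univ : Finset E).powerset, X ^ (G.petrial A).nFaces

/-- The faces of `G`, i.e. the vertices of the geometric dual `G*`. -/
def Face (G : RibbonGraph E) := Quot G.faceStep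

instance [Finite E] (G : RibbonGraph E) : Finite (Face G) :=
  Finite.of_surjective (Quot.mk _) (fun q => Quot.exists_rep q)

/-- The underlying simple graph of the geometric dual `G*`: vertices are the faces of `G`,
two distinct faces being adjacent when they share an edge. -/
def dualGraph (G : RibbonGraph E) : SimpleGraph (Face G) where
  Adj x y := x ≠ y ∧ ∃ g : Flags E, x = Quot.mk _ g ∧ y = Quot.mk _ (G.σ2 g)
  symm := ⟨by
    rintro x y ⟨hxy, g, hx, hy⟩
    exact ⟨Ne.symm hxy, G.σ2 g, hy, by rw [σ2_σ2]; exact hx⟩⟩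
  loopless := ⟨by rintro x ⟨h, -⟩; exact h rfl⟩

/-- The chromatic polynomial of a finite simple graph, via Whitney's rank expansion:
`χ(H;λ) = ∑_{S ⊆ E(H)} (−1)^{|S|} λ^{c(S)}`, where `c(S)` is the number of connected
components of the spanning subgraph with edge set `S`. -/
noncomputable def chromPoly {V : Type} [Finite V] (H : SimpleGraph V) : Polynomial ℤ := by
  classical
  haveI := Fintype.ofFinite V
  exact ∑ S ∈ ((Finset.univ : Finset (Sym2 V)).filter (· ∈ H.edgeSet)).powerset,
    (-1 : Polynomial ℤ) ^ S.card * X ^ (Nat.card (Quot (fun x y : V => s(x, y) ∈ S)))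

/-- The chromatic polynomial `χ(G*; λ)` of the geometric dual of `G` (as a multigraph:
it is `0` when `G*` has a loop, i.e. when some edge of `G` has the same face on both of
its sides, and otherwise it is the chromatic polynomial of the underlying simple graph
of `G*`). -/
noncomputable def dualChrom [Finite E] (G : RibbonGraph E) : Polynomial ℤ := by
  classical
  exact if ∃ g : Flags E, Quot.mk G.faceStep (G.σ2 g) = Quot.mk G.faceStep g then 0
    else chromPoly G.dualGraph



/-! ## Auxiliary development -/

section Aux

open Equiv Equiv.Perm Finset

/-! ### Klein four-group facts -/

lemma kAdd_zero' : ∀ p : Bool × Bool, kAdd (false, false) p = p := by decide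
lemma kAdd_comm' : ∀ p q : Bool × Bool, kAdd p q = kAdd q p := by decide
lemma kAdd_rearrange : ∀ p a b : Bool × Bool, kAdd (kAdd p b) a = kAdd p (kAdd a b) := by decide
lemma kAdd_self_iff : ∀ p b : Bool × Bool, kAdd p b = p ↔ b = (false, false) := by decide
lemma kAdd_cancel : ∀ a b : Bool × Bool, kAdd a (kAdd a b) = b := by decide
lemma kExhaust : ∀ a b p : Bool × Bool, a ≠ (false, false) → b ≠ (false, false) → a ≠ b →
    p = (false, false) ∨ p = a ∨ p = b ∨ p = kAdd a b := by decide
lemma kCard2 : ∀ (g : Bool × Bool → Bool) (a : Bool × Bool), a ≠ (false, false) →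
    (∀ p, g (kAdd p a) = !g p) →
    (Finset.univ.filter fun p => g p = true).card = 2 := by decide

/-! ### Orbit counting for permutations -/

section OrbitCount

variable {α : Type*} [Fintype α] [DecidableEq α]

lemma sameCycle_fixed {π : Equiv.Perm α} {x y : α} (h : π.SameCycle x y) (hx : π x = x) :
    y = x := by
  obtain ⟨k, hk⟩ := h
  rw [← hk, Equiv.Perm.zpow_apply_eq_self_of_apply_eq_self hx]

lemma natCard_quot_sameCycle (π : Equiv.Perm α) :
    Nat.card (Quot π.SameCycle) + π.support.card
      = π.cycleFactorsFinset.card + Fintype.card α := by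
  classical
  have hfun : ∀ x : α, ¬π x = x → π.cycleOf x ∈ π.cycleFactorsFinset := fun x hx =>
    Equiv.Perm.cycleOf_mem_cycleFactorsFinset_iff.2 (Equiv.Perm.mem_support.2 hx)
  set g : α → ({c // c ∈ π.cycleFactorsFinset} ⊕ {x // π x = x}) := fun x =>
    if h : π x = x then Sum.inr ⟨x, h⟩ else Sum.inl ⟨π.cycleOf x, hfun x h⟩ with hg
  have hresp : ∀ x y, π.SameCycle x y → g x = g y := by
    intro x y hxy
    by_cases hx : π x = x
    · rw [sameCycle_fixed hxy hx]
    · by_cases hy : π y = y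
      · exact absurd (show π x = x by
          rw [sameCycle_fixed hxy.symm hy]; exact hy) hx
      · simp only [hg, dif_neg hx, dif_neg hy]
        exact congrArg Sum.inl (Subtype.ext hxy.cycleOf_eq)
  have hbij : Function.Bijective (Quot.lift g hresp) := by
    constructor
    · intro q q'
      induction q using Quot.ind with | _ x => ?_
      induction q' using Quot.ind with | _ y => ?_
      intro hxy
      change g x = g y at hxy
      by_cases hx : π x = x
      · by_cases hy : π y = y
        · simp only [hg, dif_pos hx, dif_pos hy] at hxy
          obtain rfl : x = y := congrArg Subtype.val (Sum.inr.inj hxy)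
          rfl
        · simp only [hg, dif_pos hx, dif_neg hy] at hxy
          exact absurd hxy Sum.inr_ne_inl
      · by_cases hy : π y = y
        · simp only [hg, dif_neg hx, dif_pos hy] at hxy
          exact absurd hxy Sum.inl_ne_inr
        · simp only [hg, dif_neg hx, dif_neg hy] at hxy
          have hcyc : π.cycleOf x = π.cycleOf y := congrArg Subtype.val (Sum.inl.inj hxy)
          have hmem : y ∈ (π.cycleOf x).support := by
            rw [hcyc]
            exact Equiv.Perm.mem_support_cycleOf_iff.2
              ⟨Equiv.Perm.SameCycle.refl _ _, Equiv.Perm.mem_support.2 hy⟩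
          exact Quot.sound (Equiv.Perm.mem_support_cycleOf_iff.1 hmem).1
    · rintro (⟨c, hc⟩ | ⟨x, hx⟩)
      · obtain ⟨hcyc, hsupp⟩ := Equiv.Perm.mem_cycleFactorsFinset_iff.1 hc
        obtain ⟨x, hx1, -⟩ := hcyc
        have hxc : x ∈ c.support := Equiv.Perm.mem_support.2 hx1
        have hπx : ¬ π x = x := by rw [← hsupp x hxc]; exact hx1
        refine ⟨Quot.mk _ x, ?_⟩
        change g x = _
        simp only [hg, dif_neg hπx]
        exact congrArg Sum.inl
          (Subtype.ext (Equiv.Perm.cycle_is_cycleOf hxc hc).symm)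
      · exact ⟨Quot.mk _ x, by change g x = _; simp [hg, dif_pos hx]⟩
  have hcard := Nat.card_eq_of_bijective _ hbij
  rw [Nat.card_sum] at hcard
  have h1 : Nat.card {c // c ∈ π.cycleFactorsFinset} = π.cycleFactorsFinset.card := by
    rw [Nat.card_eq_fintype_card, Fintype.card_coe]
  have h2 : Fintype.card {x // π x = x} + π.support.card = Fintype.card α := by
    rw [Fintype.card_subtype]
    have hs : π.support = Finset.univ.filter (fun x => ¬ π x = x) := by
      ext x; simp [Equiv.Perm.mem_support]
    rw [hs]
    simpa using Finset.card_filter_add_card_filter_not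
      (s := (Finset.univ : Finset α)) (p := fun x => π x = x)
  rw [hcard, h1, Nat.card_eq_fintype_card]
  omega

lemma neg_one_pow_congr {n m : ℕ} (h : n % 2 = m % 2) : ((-1 : ℤˣ)) ^ n = (-1) ^ m := by
  conv_lhs => rw [← Nat.div_add_mod n 2]
  conv_rhs => rw [← Nat.div_add_mod m 2]
  simp [pow_add, pow_mul, h]

lemma sign_eq_orbit_parity (π : Equiv.Perm α) :
    Equiv.Perm.sign π = (-1 : ℤˣ) ^ (Fintype.card α + Nat.card (Quot π.SameCycle)) := by
  rw [Equiv.Perm.sign_of_cycleType]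
  apply neg_one_pow_congr
  have h1 : π.cycleType.sum = π.support.card := Equiv.Perm.sum_cycleType π
  have h2 : Multiset.card π.cycleType = π.cycleFactorsFinset.card := by
    rw [Equiv.Perm.cycleType]; exact Multiset.card_map _ _
  have key := natCard_quot_sameCycle π
  omega

end OrbitCount

/-! ### Curves of a pair of involutions -/

section Curves

variable {α : Type*}

/-- An involution as a permutation. -/
def involPerm (σ : α → α) (h : ∀ x, σ (σ x) = x) : Equiv.Perm α := ⟨σ, σ, h, h⟩

@[simp] lemma involPerm_apply (σ : α → α) (h) (x : α) : involPerm σ h x = σ x := rfl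

/-- The "one step along the curve" permutation. -/
def dperm (σ s : α → α) (hσ : ∀ x, σ (σ x) = x) (hs : ∀ x, s (s x) = x) : Equiv.Perm α :=
  involPerm s hs * involPerm σ hσ

@[simp] lemma dperm_apply (σ s : α → α) (hσ hs) (x : α) : dperm σ s hσ hs x = s (σ x) := rfl

variable (σ s : α → α) (hσ : ∀ x, σ (σ x) = x) (hs : ∀ x, s (s x) = x)
  (d : α → Bool) (hdσ : ∀ x, d (σ x) = !d x) (hds : ∀ x, d (s x) = !d x)

/-- The curve permutation restricted to the positive flags. -/
def dpermD : Equiv.Perm {x : α // d x = true} :=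
  (dperm σ s hσ hs).subtypePerm (fun x => by rw [dperm_apply, hds, hdσ, Bool.not_not])

lemma dpermD_apply (z : {x : α // d x = true}) :
    (dpermD σ s hσ hs d hdσ hds z : α) = s (σ z.1) := rfl

lemma eqvGen_zpow (k : ℤ) :
    ∀ x : α, Relation.EqvGen (fun x y => y = σ x ∨ y = s x) x ((dperm σ s hσ hs ^ k) x) := by
  set r := fun x y : α => y = σ x ∨ y = s x with hr
  set p := dperm σ s hσ hs with hp0
  have hxσ : ∀ x, Relation.EqvGen r x (σ x) := fun x => Relation.EqvGen.rel _ _ (Or.inl rfl)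
  have hxs : ∀ x, Relation.EqvGen r x (s x) := fun x => Relation.EqvGen.rel _ _ (Or.inr rfl)
  have hp : ∀ x, Relation.EqvGen r x (p x) := fun x =>
    Relation.EqvGen.trans _ _ _ (hxσ x) (hxs (σ x))
  have hpinv : ∀ x, Relation.EqvGen r x (p⁻¹ x) := by
    intro x
    have h1 : p⁻¹ x = σ (s x) := by
      apply p.injective
      rw [Equiv.Perm.inv_def, Equiv.apply_symm_apply, hp0, dperm_apply, hσ, hs]
    rw [h1]
    exact Relation.EqvGen.trans _ _ _ (hxs x) (hxσ (s x))
  induction k using Int.induction_on with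
  | zero => intro x; simpa using Relation.EqvGen.refl x
  | succ k ih =>
      intro x
      have h1 : (p ^ ((k : ℤ) + 1)) x = (p ^ (k : ℤ)) (p x) := by
        rw [zpow_add_one]; rfl
      rw [h1]
      exact Relation.EqvGen.trans _ _ _ (hp x) (ih (p x))
  | pred k ih =>
      intro x
      have h1 : (p ^ (-(k : ℤ) - 1)) x = (p ^ (-(k : ℤ))) (p⁻¹ x) := by
        rw [zpow_sub_one]; rfl
      rw [h1]
      exact Relation.EqvGen.trans _ _ _ (hpinv x) (ih (p⁻¹ x))

/-- The element of the positive part in the `σ`-orbit of `x`. -/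
def toD (x : α) : {x : α // d x = true} :=
  if h : d x = true then ⟨x, h⟩
  else ⟨σ x, by rw [hdσ]; simp only [Bool.not_eq_true] at h; rw [h]; rfl⟩

noncomputable def curveEquiv :
    Quot (fun x y : α => y = σ x ∨ y = s x) ≃
      Quot (dpermD σ s hσ hs d hdσ hds).SameCycle := by
  classical
  set p := dperm σ s hσ hs with hp0
  set p' := dpermD σ s hσ hs d hdσ hds with hp'0
  refine
    { toFun := Quot.lift (fun x => Quot.mk _ (toD σ d hdσ x)) ?_
      invFun := Quot.lift (fun z => Quot.mk _ z.1) ?_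
      left_inv := ?_
      right_inv := ?_ }
  · intro x y hxy
    rcases hxy with rfl | rfl
    · by_cases h : d x = true
      · have h2 : ¬ d (σ x) = true := by rw [hdσ, h]; simp
        have heq : toD σ d hdσ (σ x) = toD σ d hdσ x := by
          simp only [toD, dif_pos h, dif_neg h2]
          exact Subtype.ext (hσ x)
        exact congrArg (fun z => Quot.mk _ z) heq.symm
      · have h2 : d (σ x) = true := by
          rw [hdσ]; simp only [Bool.not_eq_true] at h; rw [h]; rfl
        simp only [toD, dif_pos h2, dif_neg h]
    · by_cases h : d x = true
      · have h2 : ¬ d (s x) = true := by rw [hds, h]; simp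
        simp only [toD, dif_pos h, dif_neg h2]
        apply Quot.sound
        refine ⟨-1, ?_⟩
        rw [zpow_neg, zpow_one]
        rw [Equiv.Perm.inv_eq_iff_eq]
        apply Subtype.ext
        rw [hp'0, dpermD_apply]
        show x = s (σ (σ (s x)))
        rw [hσ, hs]
      · have hx2 : d (σ x) = true := by
          rw [hdσ]; simp only [Bool.not_eq_true] at h; rw [h]; rfl
        have h2 : d (s x) = true := by
          rw [hds]; simp only [Bool.not_eq_true] at h; rw [h]; rfl
        simp only [toD, dif_neg h, dif_pos h2]
        apply Quot.sound
        refine ⟨1, ?_⟩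
        rw [zpow_one]
        apply Subtype.ext
        rw [hp'0, dpermD_apply]
        show s (σ (σ x)) = s x
        rw [hσ]
  · rintro z w ⟨k, hk⟩
    apply Quot.eqvGen_sound
    have hval : ((p' ^ k) z).1 = (p ^ k) z.1 := by
      rw [hp'0, dpermD, Equiv.Perm.subtypePerm_zpow]; rfl
    rw [← hk, hval]
    exact eqvGen_zpow σ s hσ hs k z.1
  · intro q
    induction q using Quot.ind with | _ x => ?_
    show Quot.mk _ ((toD σ d hdσ x).1) = Quot.mk _ x
    by_cases h : d x = true
    · simp only [toD, dif_pos h]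
    · simp only [toD, dif_neg h]
      exact Quot.sound (Or.inl (hσ x).symm)
  · intro q
    induction q using Quot.ind with | _ z => ?_
    show Quot.mk _ (toD σ d hdσ z.1) = Quot.mk _ z
    have heq : toD σ d hdσ z.1 = z := by
      simp only [toD, dif_pos z.2]
    rw [heq]

lemma curve_card :
    Nat.card (Quot (fun x y : α => y = σ x ∨ y = s x)) =
      Nat.card (Quot (dpermD σ s hσ hs d hdσ hds).SameCycle) :=
  Nat.card_congr (curveEquiv σ s hσ hs d hdσ hds)

end Curves

/-! ### Invariant functions on a quotient -/

def quotFunEquiv {α β : Type*} (r : α → α → Prop) :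
    (Quot r → β) ≃ {c : α → β // ∀ x y, r x y → c x = c y} where
  toFun g := ⟨fun x => g (Quot.mk r x), fun x y h => congrArg g (Quot.sound h)⟩
  invFun c := Quot.lift c.1 c.2
  left_inv g := funext fun q => Quot.inductionOn q fun _ => rfl
  right_inv c := rfl

end Aux

section Main

variable {E : Type} [Fintype E] [DecidableEq E]

lemma subtypePerm_congr {α : Type*} {p : α → Prop} {f g : Equiv.Perm α} (h : f = g)
    (hf : ∀ x, p (f x) ↔ p x) (hg : ∀ x, p (g x) ↔ p x) :
    f.subtypePerm hf = g.subtypePerm hg := by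
  subst h; rfl

lemma σ0_invol (H : RibbonGraph E) : ∀ f, H.σ0 (H.σ0 f) = f := by
  intro f
  cases f with
  | mk e p => simp [σ0, kAdd_kAdd]

lemma petrial_σ0 (G : RibbonGraph E) (A : Finset E) (f : Flags E) :
    (G.petrial A).σ0 f = if f.1 ∈ A then G.σ0 (G.σ2 f) else G.σ0 f := by
  cases f with
  | mk e p =>
    by_cases h : e ∈ A <;> simp [petrial, σ0, σ2, h, kAdd_rearrange]

lemma parity_lemma (G : RibbonGraph E) (hor : G.Orientable) (hcb : G.CheckerboardColourable)
    (A : Finset E) :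
    ((-1 : ℤ)) ^ (G.petrial A).nFaces = (-1 : ℤ) ^ (G.nFaces + A.card) := by
  classical
  obtain ⟨o, ho⟩ := hor
  obtain ⟨cb, hcb⟩ := hcb
  set d : Flags E → Bool := fun f => xor (o f) (cb f) with hd
  have hdσ0 : ∀ f, d (G.σ0 f) = !d f := by
    intro f
    show xor (o (G.σ0 f)) (cb (G.σ0 f)) = !xor (o f) (cb f)
    rw [(ho f).1, (hcb f).1]
    cases o f <;> cases cb f <;> rfl
  have hds1 : ∀ f, d (G.s1 f) = !d f := by
    intro f
    show xor (o (G.s1 f)) (cb (G.s1 f)) = !xor (o f) (cb f)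
    rw [(ho f).2.2, (hcb f).2.1]
    cases o f <;> cases cb f <;> rfl
  have hdσ2 : ∀ f, d (G.σ2 f) = d f := by
    intro f
    show xor (o (G.σ2 f)) (cb (G.σ2 f)) = xor (o f) (cb f)
    rw [(ho f).2.1, (hcb f).2.2]
    cases o f <;> cases cb f <;> rfl
  have hdσ0A : ∀ f, d ((G.petrial A).σ0 f) = !d f := by
    intro f
    rw [petrial_σ0]
    by_cases h : f.1 ∈ A
    · rw [if_pos h, hdσ0, hdσ2]
    · rw [if_neg h, hdσ0]
  set pA := dpermD ((G.petrial A).σ0) G.s1 (σ0_invol _) G.s1_invol d hdσ0A hds1 with hpA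
  set pG := dpermD G.σ0 G.s1 (σ0_invol _) G.s1_invol d hdσ0 hds1 with hpG
  have h1 : (G.petrial A).nFaces = Nat.card (Quot pA.SameCycle) :=
    curve_card ((G.petrial A).σ0) G.s1 (σ0_invol _) G.s1_invol d hdσ0A hds1
  have h2 : G.nFaces = Nat.card (Quot pG.SameCycle) :=
    curve_card G.σ0 G.s1 (σ0_invol _) G.s1_invol d hdσ0 hds1
  -- the toggling permutations
  have htinv : ∀ B : Finset E, ∀ f : Flags E,
      (fun f : Flags E => if f.1 ∈ B then G.σ2 f else f)
        ((fun f : Flags E => if f.1 ∈ B then G.σ2 f else f) f) = f := by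
    intro B f
    by_cases h : f.1 ∈ B
    · simp only [if_pos h]
      have h2 : (G.σ2 f).1 ∈ B := h
      rw [if_pos h2, σ2_σ2]
    · simp only [if_neg h, if_neg h]
  set t : Finset E → Equiv.Perm (Flags E) := fun B =>
    involPerm (fun f => if f.1 ∈ B then G.σ2 f else f) (htinv B) with htdef
  have htd : ∀ B : Finset E, ∀ f : Flags E, d (t B f) = d f := by
    intro B f
    show d (if f.1 ∈ B then G.σ2 f else f) = d f
    by_cases h : f.1 ∈ B
    · rw [if_pos h, hdσ2]
    · rw [if_neg h]
  set t' : Finset E → Equiv.Perm {f : Flags E // d f = true} := fun B =>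
    (t B).subtypePerm (fun f => by rw [htd B f]) with ht'def
  have ht'app : ∀ B (z : {f : Flags E // d f = true}),
      ((t' B) z).1 = if z.1.1 ∈ B then G.σ2 z.1 else z.1 := fun B z => rfl
  -- decomposition
  have hdecomp : pA = pG * t' A := by
    apply Equiv.ext
    intro z
    apply Subtype.ext
    rw [Equiv.Perm.mul_apply]
    rw [hpA, hpG, dpermD_apply, dpermD_apply, ht'app]
    rw [petrial_σ0]
    by_cases h : z.1.1 ∈ A
    · rw [if_pos h, if_pos h]
    · rw [if_neg h, if_neg h]
  -- sign of a single toggle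
  have hsign_e : ∀ e : E, Equiv.Perm.sign (t' {e}) = -1 := by
    intro e
    have hiff : ∀ z : {f : Flags E // d f = true}, (t' {e}) z ≠ z ↔ z.1.1 = e := by
      intro z
      constructor
      · intro hz
        by_contra hne
        apply hz
        apply Subtype.ext
        rw [ht'app, if_neg (by simpa using hne)]
      · intro hz hcon
        have hval := congrArg Subtype.val hcon
        rw [ht'app, if_pos (by simpa using hz)] at hval
        have hb := congrArg Prod.snd hval
        have : G.b z.1.1 = (false, false) := by
          have := (kAdd_self_iff z.1.2 (G.b z.1.1)).1 hb
          exact this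
        exact G.b_ne _ this
    have e2 : {z : {f : Flags E // d f = true} // z.1.1 = e} ≃
        {p : Bool × Bool // d (e, p) = true} :=
      { toFun := fun z => ⟨z.1.1.2, by
          obtain ⟨⟨⟨e', q⟩, hq⟩, h⟩ := z
          cases h
          exact hq⟩
        invFun := fun p => ⟨⟨(e, p.1), p.2⟩, rfl⟩
        left_inv := by
          rintro ⟨⟨⟨e', q⟩, hq⟩, h⟩
          cases h
          rfl
        right_inv := fun p => rfl }
    have hc2 : Fintype.card {p : Bool × Bool // d (e, p) = true} = 2 := by
      rw [Fintype.card_subtype]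
      exact kCard2 (fun p => d (e, p)) (G.a e) (G.a_ne e) (fun p => hdσ0 (e, p))
    have hcard : (t' {e}).support.card = 2 := by
      have hs : (t' {e}).support =
          Finset.univ.filter (fun z => (t' {e}) z ≠ z) := by
        ext z; simp [Equiv.Perm.mem_support]
      rw [hs, ← Fintype.card_subtype]
      rw [Fintype.card_congr ((Equiv.subtypeEquivRight hiff).trans e2)]
      exact hc2
    obtain ⟨x, y, hxy, hswap⟩ := Equiv.Perm.card_support_eq_two.1 hcard
    rw [hswap, Equiv.Perm.sign_swap hxy]
  -- sign of toggles
  have hsign_t : ∀ B : Finset E, Equiv.Perm.sign (t' B) = (-1) ^ B.card := by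
    intro B
    induction B using Finset.induction_on with
    | empty =>
        have h0 : t' ∅ = 1 := by
          apply Equiv.ext
          intro z
          apply Subtype.ext
          rw [ht'app]
          simp
        rw [h0]
        simp
    | insert e B hni ih =>
        have htapp : ∀ (C : Finset E) (f : Flags E), t C f = if f.1 ∈ C then G.σ2 f else f :=
          fun C f => rfl
        have hsplit0 : t (insert e B) = t B * t {e} := by
          apply Equiv.ext
          intro f
          rw [Equiv.Perm.mul_apply, htapp, htapp, htapp]
          by_cases h1 : f.1 = e
          · rw [if_pos (show f.1 ∈ ({e} : Finset E) by simp [h1]),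
              if_pos (show f.1 ∈ insert e B by simp [h1])]
            have hkey : (G.σ2 f).1 = e := h1
            rw [if_neg (show ¬ (G.σ2 f).1 ∈ B from fun hb => hni (hkey ▸ hb))]
          · rw [if_neg (show ¬ f.1 ∈ ({e} : Finset E) by simp [h1])]
            by_cases h2 : f.1 ∈ B
            · rw [if_pos h2, if_pos (Finset.mem_insert_of_mem h2)]
            · rw [if_neg h2, if_neg (show ¬ f.1 ∈ insert e B from fun hb => by
                rcases Finset.mem_insert.1 hb with h | h
                · exact h1 h
                · exact h2 h)]
        have hsplit : t' (insert e B) = t' B * t' {e} := by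
          show (t (insert e B)).subtypePerm _ = _
          rw [Equiv.Perm.subtypePerm_mul]
          exact subtypePerm_congr hsplit0 _ _
        rw [hsplit, map_mul, ih, hsign_e e, Finset.card_insert_of_notMem hni]
        rw [pow_succ]
  have hsignA : Equiv.Perm.sign pA = Equiv.Perm.sign pG * (-1) ^ A.card := by
    rw [hdecomp, map_mul, hsign_t A]
  -- orbit parity
  have hoA := sign_eq_orbit_parity pA
  have hoG := sign_eq_orbit_parity pG
  set cD := Fintype.card {f : Flags E // d f = true} with hcD
  have hkey : ((-1 : ℤˣ)) ^ (cD + (G.petrial A).nFaces)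
      = (-1 : ℤˣ) ^ (cD + G.nFaces) * (-1) ^ A.card := by
    rw [h1, h2, ← hoA, ← hoG, hsignA]
  have hcancel : ((-1 : ℤˣ)) ^ ((G.petrial A).nFaces) = (-1 : ℤˣ) ^ (G.nFaces + A.card) := by
    have h3 : ((-1 : ℤˣ)) ^ cD * ((-1 : ℤˣ)) ^ ((G.petrial A).nFaces)
        = ((-1 : ℤˣ)) ^ cD * ((-1 : ℤˣ)) ^ (G.nFaces + A.card) := by
      rw [← pow_add, hkey, pow_add, mul_assoc, ← pow_add]
    exact mul_left_cancel h3
  have h4 := congrArg Units.val hcancel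
  simpa using h4

open scoped Classical in
lemma totCount_eq (G : RibbonGraph E) {n : ℕ} (c : Flags E → Fin n) :
    G.totCount c = (Finset.univ.filter (fun e => G.TotalAt c e)).card := by
  classical
  rw [totCount, Nat.card_eq_fintype_card, Fintype.card_subtype]

open scoped Classical in
lemma per_colour (G : RibbonGraph E) {n : ℕ} (c : Flags E → Fin n) :
    ∑ A ∈ (Finset.univ : Finset E).powerset,
        (if (∀ x y, (G.petrial A).faceStep x y → c x = c y) then (1 : ℤ) else 0)
      = if G.Permissible c then (2 : ℤ) ^ G.totCount c else 0 := by
  classical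
  set We : E → Prop := fun e => ∀ p : Bool × Bool, c (G.σ0 (e, p)) = c (e, p) with hWedef
  set Ce : E → Prop := fun e => ∀ p : Bool × Bool, c (G.σ0 (G.σ2 (e, p))) = c (e, p) with hCedef
  -- characterisation of compatibility
  have hchar : ∀ A : Finset E, (∀ x y, (G.petrial A).faceStep x y → c x = c y) ↔
      (G.IsValuation c ∧ ∀ e, if e ∈ A then Ce e else We e) := by
    intro A
    constructor
    · intro h
      refine ⟨fun f => (h f (G.s1 f) (Or.inr rfl)).symm, fun e => ?_⟩
      by_cases he : e ∈ A
      · rw [if_pos he]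
        intro p
        have h2 := h (e, p) ((G.petrial A).σ0 (e, p)) (Or.inl rfl)
        rw [petrial_σ0, if_pos he] at h2
        exact h2.symm
      · rw [if_neg he]
        intro p
        have h2 := h (e, p) ((G.petrial A).σ0 (e, p)) (Or.inl rfl)
        rw [petrial_σ0, if_neg he] at h2
        exact h2.symm
    · rintro ⟨hval, hA⟩ x y hstep
      rcases hstep with rfl | rfl
      · rw [petrial_σ0]
        by_cases he : x.1 ∈ A
        · rw [if_pos he]
          have h2 := hA x.1
          rw [if_pos he] at h2
          exact (h2 x.2).symm
        · rw [if_neg he]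
          have h2 := hA x.1
          rw [if_neg he] at h2
          exact (h2 x.2).symm
      · exact (hval x).symm
  by_cases hval : G.IsValuation c
  · -- per-edge dictionaries
    have totalOf : ∀ e, (∀ p, c (e, p) = c (e, (false, false))) → G.TotalAt c e :=
      fun e h p q => (h p).trans (h q).symm
    have hWe_iff : ∀ e, We e ↔ (G.WhiteAt c e ∨ G.TotalAt c e) := by
      intro e
      constructor
      · intro hW
        by_cases h0 : c (e, (false, false)) = c (G.σ2 (e, (false, false)))
        · refine Or.inr (totalOf e ?_)
          intro p
          rcases kExhaust (G.a e) (G.b e) p (G.a_ne e) (G.b_ne e) (G.ab_ne e) with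
            rfl | rfl | rfl | rfl
          · rfl
          · simpa [σ0, kAdd_zero'] using hW (false, false)
          · simpa [σ2, kAdd_zero'] using h0.symm
          · have hb : c (e, G.b e) = c (e, (false, false)) := by
              simpa [σ2, kAdd_zero'] using h0.symm
            have hab : c (e, kAdd (G.b e) (G.a e)) = c (e, G.b e) := by
              simpa [σ0] using hW (G.b e)
            rw [← kAdd_comm', hab, hb]
        · exact Or.inl ⟨hW, h0⟩
      · rintro (hw | ht)
        · exact hw.1
        · intro p
          exact ht _ _
    have hCe' : ∀ e, Ce e ↔
        (∀ p : Bool × Bool, c (e, kAdd p (kAdd (G.a e) (G.b e))) = c (e, p)) := by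
      intro e
      constructor
      · intro h p
        have := h p
        simpa [σ0, σ2, kAdd_rearrange] using this
      · intro h p
        have := h p
        simpa [σ0, σ2, kAdd_rearrange] using this
    have hCe_iff : ∀ e, Ce e ↔ (G.CrossAt c e ∨ G.TotalAt c e) := by
      intro e
      constructor
      · intro hC
        have hC2 := (hCe' e).1 hC
        by_cases h0 : c (e, (false, false)) = c (G.σ0 (e, (false, false)))
        · refine Or.inr (totalOf e ?_)
          intro p
          rcases kExhaust (G.a e) (G.b e) p (G.a_ne e) (G.b_ne e) (G.ab_ne e) with
            rfl | rfl | rfl | rfl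
          · rfl
          · simpa [σ0, kAdd_zero'] using h0.symm
          · have h1 : c (e, kAdd (G.a e) (kAdd (G.a e) (G.b e))) = c (e, G.a e) := hC2 (G.a e)
            rw [kAdd_cancel] at h1
            have h2 : c (e, G.a e) = c (e, (false, false)) := by
              simpa [σ0, kAdd_zero'] using h0.symm
            rw [h1, h2]
          · have h1 : c (e, kAdd (false, false) (kAdd (G.a e) (G.b e)))
                = c (e, (false, false)) := hC2 (false, false)
            rwa [kAdd_zero'] at h1
        · exact Or.inl ⟨hC, h0⟩
      · rintro (hx | ht)
        · exact hx.1
        · intro p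
          exact ht _ _
    have hTot_iff : ∀ e, (Ce e ∧ We e) ↔ G.TotalAt c e := by
      intro e
      constructor
      · rintro ⟨hC, hW⟩
        have hC2 := (hCe' e).1 hC
        apply totalOf
        intro p
        have ha : c (e, G.a e) = c (e, (false, false)) := by
          simpa [σ0, kAdd_zero'] using hW (false, false)
        rcases kExhaust (G.a e) (G.b e) p (G.a_ne e) (G.b_ne e) (G.ab_ne e) with
          rfl | rfl | rfl | rfl
        · rfl
        · exact ha
        · have h1 : c (e, kAdd (G.a e) (kAdd (G.a e) (G.b e))) = c (e, G.a e) := hC2 (G.a e)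
          rw [kAdd_cancel] at h1
          rw [h1, ha]
        · have h1 : c (e, kAdd (false, false) (kAdd (G.a e) (G.b e)))
              = c (e, (false, false)) := hC2 (false, false)
          rwa [kAdd_zero'] at h1
      · intro ht
        constructor
        · intro p
          exact ht _ _
        · intro p
          exact ht _ _
    -- rewrite each summand
    have step1 : ∀ A ∈ (Finset.univ : Finset E).powerset,
        (if (∀ x y, (G.petrial A).faceStep x y → c x = c y) then (1 : ℤ) else 0)
          = if (∀ e, if e ∈ A then Ce e else We e) then 1 else 0 := by
      intro A _
      refine if_congr ?_ rfl rfl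
      rw [hchar]
      exact and_iff_right hval
    rw [Finset.sum_congr rfl step1]
    -- expand the product
    have step2 : ∑ A ∈ (Finset.univ : Finset E).powerset,
        (if (∀ e, if e ∈ A then Ce e else We e) then (1 : ℤ) else 0)
          = ∏ e, ((if Ce e then (1 : ℤ) else 0) + (if We e then 1 else 0)) := by
      rw [Finset.prod_add]
      apply Finset.sum_congr rfl
      intro A hA
      rw [Finset.prod_boole, Finset.prod_boole]
      by_cases h : ∀ e, if e ∈ A then Ce e else We e
      · rw [if_pos h, if_pos, if_pos, one_mul]
        · intro e he
          have h2 := h e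
          rwa [if_neg (Finset.mem_sdiff.1 he).2] at h2
        · intro e he
          have h2 := h e
          rwa [if_pos he] at h2
      · rw [if_neg h]
        obtain ⟨e, he⟩ := not_forall.1 h
        by_cases hm : e ∈ A
        · rw [if_neg (show ¬ ∀ i ∈ A, Ce i from fun hP => he (by
            rw [if_pos hm]; exact hP e hm)), zero_mul]
        · rw [if_neg (show ¬ ∀ i ∈ Finset.univ \ A, We i from fun hQ => he (by
            rw [if_neg hm]
            exact hQ e (Finset.mem_sdiff.2 ⟨Finset.mem_univ e, hm⟩))), mul_zero]
    rw [step2]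
    by_cases hperm : ∀ e : E, G.WhiteAt c e ∨ G.CrossAt c e ∨ G.TotalAt c e
    · rw [if_pos ⟨hval, hperm⟩]
      have hprod : ∀ e ∈ (Finset.univ : Finset E),
          ((if Ce e then (1 : ℤ) else 0) + (if We e then 1 else 0))
            = (if G.TotalAt c e then 2 else 1) := by
        intro e _
        by_cases ht : G.TotalAt c e
        · rw [if_pos ((hCe_iff e).2 (Or.inr ht)), if_pos ((hWe_iff e).2 (Or.inr ht)),
            if_pos ht]
          norm_num
        · rw [if_neg ht]
          rcases hperm e with hw | hx | hT
          · rw [if_pos ((hWe_iff e).2 (Or.inl hw))]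
            rw [if_neg (show ¬ Ce e from fun hce =>
              ht ((hTot_iff e).1 ⟨hce, (hWe_iff e).2 (Or.inl hw)⟩))]
            norm_num
          · rw [if_pos ((hCe_iff e).2 (Or.inl hx))]
            rw [if_neg (show ¬ We e from fun hwe =>
              ht ((hTot_iff e).1 ⟨(hCe_iff e).2 (Or.inl hx), hwe⟩))]
            norm_num
          · exact absurd hT ht
      rw [Finset.prod_congr rfl hprod, Finset.prod_ite, Finset.prod_const, Finset.prod_const,
        one_pow, mul_one, totCount_eq]
    · rw [if_neg (fun h => hperm h.2)]
      obtain ⟨e, he⟩ := not_forall.1 hperm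
      apply Finset.prod_eq_zero (Finset.mem_univ e)
      rw [if_neg (show ¬ Ce e from fun hce => he (by
          rcases (hCe_iff e).1 hce with h | h
          · exact Or.inr (Or.inl h)
          · exact Or.inr (Or.inr h))),
        if_neg (show ¬ We e from fun hwe => he (by
          rcases (hWe_iff e).1 hwe with h | h
          · exact Or.inl h
          · exact Or.inr (Or.inr h))),
        add_zero]

  · rw [if_neg (show ¬ G.Permissible c from fun h => hval h.1)]
    have h0 : ∀ A ∈ (Finset.univ : Finset E).powerset,
        (if (∀ x y, (G.petrial A).faceStep x y → c x = c y) then (1 : ℤ) else 0) = 0 := by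
      intro A _
      rw [if_neg (show ¬ _ from fun h => hval ((hchar A).1 h).1)]
    rw [Finset.sum_congr rfl h0, Finset.sum_const_zero]

open scoped Classical in
lemma count_lemma (G : RibbonGraph E) (n : ℕ) :
    ∑ A ∈ (Finset.univ : Finset E).powerset, ((n : ℤ)) ^ (G.petrial A).nFaces
      = ∑ c ∈ (Finset.univ : Finset (Flags E → Fin n)).filter (fun c => G.Permissible c),
          (2 : ℤ) ^ G.totCount c := by
  classical
  have hA : ∀ A : Finset E, ((n : ℤ)) ^ (G.petrial A).nFaces
      = ∑ c : Flags E → Fin n,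
          (if (∀ x y, (G.petrial A).faceStep x y → c x = c y) then (1 : ℤ) else 0) := by
    intro A
    have hfin : Finite (Quot (G.petrial A).faceStep) :=
      Finite.of_surjective (Quot.mk _) (fun q => Quot.exists_rep q)
    have h1 : (n : ℕ) ^ (G.petrial A).nFaces
        = Nat.card {c : Flags E → Fin n // ∀ x y, (G.petrial A).faceStep x y → c x = c y} := by
      rw [← Nat.card_congr (quotFunEquiv (β := Fin n) ((G.petrial A).faceStep))]
      rw [Nat.card_fun]
      simp [nFaces, Nat.card_eq_fintype_card]
    have h2 : Nat.card {c : Flags E → Fin n // ∀ x y, (G.petrial A).faceStep x y → c x = c y}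
        = (Finset.univ.filter
            (fun c : Flags E → Fin n => ∀ x y, (G.petrial A).faceStep x y → c x = c y)).card := by
      rw [Nat.card_eq_fintype_card, Fintype.card_subtype]
    rw [show ((n : ℤ)) ^ (G.petrial A).nFaces = (((n : ℕ) ^ (G.petrial A).nFaces : ℕ) : ℤ) by
      push_cast; ring]
    rw [h1, h2, ← Finset.sum_boole]
  rw [Finset.sum_congr rfl (fun A _ => hA A)]
  rw [Finset.sum_comm]
  rw [Finset.sum_congr rfl (fun c _ => per_colour G c)]
  rw [← Finset.sum_filter]

end Main

open scoped Classical in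
/-- If `G` is orientable and checkerboard colourable, then for every positive integer
`n`, `P(G;−n) = (−1)^{f(G)} ∑_s 2^{m(s)}`, the sum over all permissible `n`-valuations
`s` of `G_m`, where `m(s)` is the number of total vertices of `s`. -/
theorem stmt14 {E : Type} [Fintype E] [DecidableEq E] (G : RibbonGraph E)
    (hor : G.Orientable) (hcb : G.CheckerboardColourable) (n : ℕ) (hn : 0 < n) :
    G.penrose.eval (-(n : ℤ)) =
      (-1 : ℤ) ^ G.nFaces *
        ∑ c ∈ (Finset.univ : Finset (Flags E → Fin n)).filter (fun c => G.Permissible c),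
          (2 : ℤ) ^ G.totCount c := by
  classical
  have eval_eq : G.penrose.eval (-(n : ℤ))
      = ∑ A ∈ (Finset.univ : Finset E).powerset,
          (-1 : ℤ) ^ A.card * (-(n : ℤ)) ^ (G.petrial A).nFaces := by
    rw [penrose, Polynomial.eval_finset_sum]
    apply Finset.sum_congr rfl
    intro A _
    simp [Polynomial.eval_mul, Polynomial.eval_pow]
  rw [eval_eq]
  have hterm : ∀ A ∈ (Finset.univ : Finset E).powerset,
      (-1 : ℤ) ^ A.card * (-(n : ℤ)) ^ (G.petrial A).nFaces
        = (-1 : ℤ) ^ G.nFaces * (n : ℤ) ^ (G.petrial A).nFaces := by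
    intro A _
    rw [show (-(n : ℤ)) ^ (G.petrial A).nFaces
        = (-1 : ℤ) ^ (G.petrial A).nFaces * (n : ℤ) ^ (G.petrial A).nFaces from by
      rw [← neg_one_mul, mul_pow]]
    rw [parity_lemma G hor hcb A, pow_add]
    have hsq : (-1 : ℤ) ^ A.card * (-1 : ℤ) ^ A.card = 1 := by
      rw [← mul_pow]
      norm_num
    calc (-1 : ℤ) ^ A.card * ((-1 : ℤ) ^ G.nFaces * (-1 : ℤ) ^ A.card
            * (n : ℤ) ^ (G.petrial A).nFaces)
        = ((-1 : ℤ) ^ A.card * (-1 : ℤ) ^ A.card)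
            * ((-1 : ℤ) ^ G.nFaces * (n : ℤ) ^ (G.petrial A).nFaces) := by ring
      _ = (-1 : ℤ) ^ G.nFaces * (n : ℤ) ^ (G.petrial A).nFaces := by rw [hsq, one_mul]
  rw [Finset.sum_congr rfl hterm, ← Finset.mul_sum, count_lemma]

end RibbonGraph

end Penrose
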